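/- Let X be a second countable, non-meager G-space and f : X → X be pseudoequivariant and G-transitive such that the G_f-orbit G_f(x) is dense in X for some x ∈ X. If for each neighbourhood W of x there exists N ∈ ℕ such that for all n ≥ N there is g_n ∈ G with g_n • f^n(W) ∩ W ≠ ∅, then f is strongly G-mixing. -/

import Mathlib

/-!
Choose points `g₁ • f^[k₁] x ∈ U` and `g₂ • f^[k₂] x ∈ V` of the dense `G_f`-orbit and let `W` be
the neighbourhood of `x` mapped into `U` and `V` by these two maps. For `n` large, the return
hypothesis gives `w ∈ W` and `g` with `g • f^[m] w ∈ W`, where `m = n + k₁ - k₂`. By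
pseudoequivariance `G`-factors can be moved past iterates of `f`, so `f^[n] (g₁ • f^[k₁] w) ∈ f^[n] U`
and `g₂ • f^[k₂] (g • f^[m] w) ∈ V` lie in the same `G`-orbit, that of `f^[n + k₁] w`.
-/

open Pointwise

/-- `f` is pseudoequivariant: `f(G • x) = G • f(x)` for every `x ∈ X`. -/
def Pseudoequivariant {G X : Type*} [Group G] [MulAction G X] (f : X → X) : Prop :=
  ∀ x : X, f '' (MulAction.orbit G x) = MulAction.orbit G (f x)

/-- The `G_f`-orbit of `x`: the set `{g • f^[k] x : g ∈ G, k ≥ 0}`. -/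
def GfOrbit {G X : Type*} [Group G] [MulAction G X] (f : X → X) (x : X) : Set X :=
  {y | ∃ (g : G) (k : ℕ), g • f^[k] x = y}

/-- `f` is `G`-transitive: for every pair of nonempty open sets `U, V ⊆ X` there are
`g ∈ G` and `k ≥ 1` with `g • f^[k] '' U ∩ V ≠ ∅`. -/
def GTransitive {G X : Type*} [Group G] [MulAction G X] [TopologicalSpace X]
    (f : X → X) : Prop :=
  ∀ U V : Set X, IsOpen U → IsOpen V → U.Nonempty → V.Nonempty →
    ∃ (g : G) (k : ℕ), 1 ≤ k ∧ (g • (f^[k] '' U) ∩ V).Nonempty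

/-- `f` is strongly `G`-mixing: for every pair of nonempty open sets `U, V` there is
`N ∈ ℕ` such that for all `n ≥ N` there is `g ∈ G` with `g • f^[n] '' U ∩ V ≠ ∅`. -/
def StronglyGMixing {G X : Type*} [Group G] [MulAction G X] [TopologicalSpace X]
    (f : X → X) : Prop :=
  ∀ U V : Set X, IsOpen U → IsOpen V → U.Nonempty → V.Nonempty →
    ∃ N : ℕ, ∀ n ≥ N, ∃ g : G, (g • (f^[n] '' U) ∩ V).Nonempty

section

variable {G X : Type*} [Group G] [MulAction G X]

namespace Pseudoequivariant

theorem comp {f g : X → X} (hf : Pseudoequivariant (G := G) f)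
    (hg : Pseudoequivariant (G := G) g) : Pseudoequivariant (G := G) (g ∘ f) := fun x => by
  rw [Set.image_comp, hf x, hg (f x), Function.comp_apply]

theorem iterate {f : X → X} (hf : Pseudoequivariant (G := G) f) :
    ∀ n : ℕ, Pseudoequivariant (G := G) f^[n]
  | 0 => fun x => Set.image_id _
  | n + 1 => by rw [Function.iterate_succ]; exact hf.comp (hf.iterate n)

theorem apply_smul_mem_orbit {f : X → X} (hf : Pseudoequivariant (G := G) f) (g : G) (y : X) :
    f (g • y) ∈ MulAction.orbit G (f y) :=
  hf y ▸ Set.mem_image_of_mem f (MulAction.mem_orbit y g)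

theorem exists_smul_image_inter_nonempty {f : X → X} (hf : Pseudoequivariant (G := G) f)
    {U V W : Set X} {g₁ g₂ : G} {k₁ k₂ m n : ℕ} (hk : n + k₁ = k₂ + m)
    (hWU : W ⊆ (fun y => g₁ • f^[k₁] y) ⁻¹' U) (hWV : W ⊆ (fun y => g₂ • f^[k₂] y) ⁻¹' V)
    (hW : ∃ g : G, (g • (f^[m] '' W) ∩ W).Nonempty) :
    ∃ g : G, (g • (f^[n] '' U) ∩ V).Nonempty := by
  obtain ⟨g, _, ⟨_, ⟨w, hw, rfl⟩, rfl⟩, hgw⟩ := hW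
  have horbit : g₂ • f^[k₂] (g • f^[m] w) ∈ MulAction.orbit G (f^[n] (g₁ • f^[k₁] w)) := by
    rw [MulAction.orbit_eq_iff.mpr ((hf.iterate n).apply_smul_mem_orbit g₁ (f^[k₁] w)),
      ← Function.iterate_add_apply, hk, Function.iterate_add_apply]
    exact MulAction.mem_orbit_of_mem_orbit g₂ ((hf.iterate k₂).apply_smul_mem_orbit g _)
  obtain ⟨h, hh : h • _ = _⟩ := horbit
  refine ⟨h, _, Set.smul_mem_smul_set (Set.mem_image_of_mem _ (hWU hw)), ?_⟩
  show h • f^[n] (g₁ • f^[k₁] w) ∈ V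
  exact hh ▸ hWV hgw

end Pseudoequivariant

theorem exists_smul_iterate_preimage_mem_nhds [TopologicalSpace X] [ContinuousConstSMul G X]
    {f : X → X} (hf : Continuous f) {x : X} (hdense : Dense (GfOrbit (G := G) f x))
    {U : Set X} (hU : IsOpen U) (hUne : U.Nonempty) :
    ∃ (g : G) (k : ℕ), (fun y => g • f^[k] y) ⁻¹' U ∈ nhds x := by
  obtain ⟨_, ⟨g, k, rfl⟩, hxU⟩ := hdense.exists_mem_open hU hUne
  exact ⟨g, k, (hU.preimage ((continuous_const_smul g).comp (hf.iterate k))).mem_nhds hxU⟩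

end

theorem gTransitive_stronglyGMixing_general {G X : Type*} [Group G] [TopologicalSpace G]
    [TopologicalSpace X] [MulAction G X] [ContinuousSMul G X]
    (f : X → X) (hf : Continuous f) (hpe : Pseudoequivariant (G := G) f)
    (x : X) (hdense : Dense (GfOrbit (G := G) f x))
    (hret : ∀ W ∈ nhds x, ∃ N : ℕ, ∀ n ≥ N, ∃ g : G, (g • (f^[n] '' W) ∩ W).Nonempty) :
    StronglyGMixing (G := G) f := by
  intro U V hU hV hUne hVne
  obtain ⟨g₁, k₁, hU₁⟩ := exists_smul_iterate_preimage_mem_nhds (G := G) hf hdense hU hUne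
  obtain ⟨g₂, k₂, hV₂⟩ := exists_smul_iterate_preimage_mem_nhds (G := G) hf hdense hV hVne
  obtain ⟨N, hN⟩ := hret _ (Filter.inter_mem hU₁ hV₂)
  exact ⟨N + k₂, fun n hn => hpe.exists_smul_image_inter_nonempty (m := n + k₁ - k₂)
    (by omega) Set.inter_subset_left Set.inter_subset_right (hN _ (by omega))⟩

/-- Let `X` be a second countable, non-meager `G`-space and `f : X → X` be
pseudoequivariant and `G`-transitive with `G_f(x)` dense in `X` for some `x ∈ X`.
If for each neighbourhood `W` of `x` there is `N ∈ ℕ` such that for all `n ≥ N` there is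
`g_n ∈ G` with `g_n • f^[n] '' W ∩ W ≠ ∅`, then `f` is strongly `G`-mixing. -/
theorem gTransitive_stronglyGMixing {G X : Type*} [Group G] [TopologicalSpace G]
    [IsTopologicalGroup G] [TopologicalSpace X] [MulAction G X] [ContinuousSMul G X]
    [SecondCountableTopology X]
    (hnm : ¬ IsMeagre (Set.univ : Set X))
    (f : X → X) (hf : Continuous f) (hpe : Pseudoequivariant (G := G) f)
    (htr : GTransitive (G := G) f)
    (x : X) (hdense : Dense (GfOrbit (G := G) f x))
    (hret : ∀ W ∈ nhds x, ∃ N : ℕ, ∀ n ≥ N, ∃ g : G, (g • (f^[n] '' W) ∩ W).Nonempty) :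
    StronglyGMixing (G := G) f :=
  gTransitive_stronglyGMixing_general f hf hpe x hdense hret
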